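/- Assume S ⊆ ℝ, inf_{x,y∈S} κ(x,y) > 0, κ(x,y) is non-decreasing in each argument, κ(x,y) ≤ c₁·T_κ[1](x)·T_κ[1](y) for all x,y ∈ S and some constant c₁ > 0, ∫_S e^{a ψ(x)} dμ(x) < ∞ for some a > 0 where ψ(x) = (∫_S κ(x,y)² dμ(y))^{1/2}, and ‖T_κ‖ < 1. Then there exist z > 1 and a μ-a.e. finite measurable function f ≥ 1 satisfying f = z·e^{T_κ[f−1]} μ-a.e. -/

import Mathlib

open MeasureTheory Filter
open scoped ENNReal

/-- Extended exponential on `ℝ≥0∞`, with `eexp ⊤ = ⊤`. -/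
noncomputable def eexp (t : ℝ≥0∞) : ℝ≥0∞ :=
  if t = ⊤ then ⊤ else ENNReal.ofReal (Real.exp t.toReal)

/-- The nonlinear operator `Φ_{z,κ}[f](x) = z·exp(T_κ[f-1](x))`. -/
noncomputable def Phi {S : Type*} [MeasurableSpace S] (μ : Measure S)
    (κ : S → S → ℝ) (z : ℝ) (f : S → ℝ≥0∞) : S → ℝ≥0∞ :=
  fun x => ENNReal.ofReal z * eexp (∫⁻ y, ENNReal.ofReal (κ x y) * (f y - 1) ∂μ)

/-- The `L²(μ)` operator norm of the integral operator `T_κ`, as a supremum over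
nonnegative functions of `L²`-norm at most one. -/
noncomputable def opNorm {S : Type*} [MeasurableSpace S] (μ : Measure S)
    (κ : S → S → ℝ) : ℝ≥0∞ :=
  ⨆ (f : S → ℝ≥0∞) (_ : Measurable f) (_ : (∫⁻ x, f x ^ 2 ∂μ) ^ ((1 : ℝ) / 2) ≤ 1),
    (∫⁻ x, (∫⁻ y, ENNReal.ofReal (κ x y) * f y ∂μ) ^ 2 ∂μ) ^ ((1 : ℝ) / 2)

/-!
Iterate `Φ = Φ_{z,κ}` from `f₀ = 1`. Since `Φ` is monotone and, by monotone convergence, commutes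
with increasing limits, the iterates increase to a fixed point `f`; what has to be shown is that
`f - 1` stays in a ball of `L²(μ)`, which makes `f` finite a.e. By Cauchy–Schwarz, `‖g‖₂ ≤ r`
gives `T_κ g ≤ r ψ` pointwise, and with `z e^s - 1 ≤ (z - 1) e^s + s + s² e^s` this yields
`‖Φ f - 1‖₂ ≤ (z - 1 + C r²) ‖e^{a ψ / 2}‖₂ + ‖T_κ‖ r` for `r ≤ a / 4` and a constant `C`
depending on `a` only, the norm being finite by the exponential moment of `ψ`. As `‖T_κ‖ < 1`,
the right side is at most `r` once `r`, and then `z - 1`, are small.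
-/

open Function

lemma eexp_eq_exp (t : ℝ≥0∞) : eexp t = EReal.exp t := by
  rcases eq_or_ne t ⊤ with rfl | ht
  · simp [eexp]
  · rw [eexp, if_neg ht, ← EReal.exp_coe, ← EReal.coe_ennreal_toReal ht]

lemma monotone_eexp : Monotone eexp := fun s t hst => by
  simpa only [eexp_eq_exp] using EReal.exp_monotone (EReal.coe_ennreal_le_coe_ennreal_iff.2 hst)

lemma continuous_eexp : Continuous eexp := by
  rw [funext eexp_eq_exp]
  exact ENNReal.continuous_exp.comp continuous_coe_ennreal_ereal

lemma one_le_eexp (t : ℝ≥0∞) : 1 ≤ eexp t := by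
  simpa [eexp_eq_exp] using (show (0 : EReal) ≤ t from EReal.coe_ennreal_nonneg t)

lemma eexp_ofReal {s : ℝ} (hs : 0 ≤ s) : eexp (ENNReal.ofReal s) = ENNReal.ofReal (Real.exp s) := by
  simp [eexp, ENNReal.toReal_ofReal hs]

lemma eexp_iSup {ι : Sort*} [Nonempty ι] (t : ι → ℝ≥0∞) : eexp (⨆ i, t i) = ⨆ i, eexp (t i) :=
  monotone_eexp.map_ciSup_of_continuousAt continuous_eexp.continuousAt (OrderTop.bddAbove _)

lemma Real.exp_sub_one_le_add_sq_mul_exp {s : ℝ} (hs : 0 ≤ s) :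
    Real.exp s - 1 ≤ s + s ^ 2 * Real.exp s := by
  have h : Real.exp s - 1 ≤ s * Real.exp s := by
    have := mul_le_mul_of_nonneg_right (Real.add_one_le_exp (-s)) (Real.exp_pos s).le
    rw [← Real.exp_add, neg_add_cancel, Real.exp_zero] at this
    linarith
  nlinarith [mul_le_mul_of_nonneg_left h hs]

lemma eexp_sub_one_le (t : ℝ≥0∞) : eexp t - 1 ≤ t + t ^ 2 * eexp t := by
  rcases eq_or_ne t ⊤ with rfl | ht
  · simp
  · rw [← ENNReal.ofReal_toReal ht, eexp_ofReal ENNReal.toReal_nonneg, ← ENNReal.ofReal_one,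
      ← ENNReal.ofReal_sub _ zero_le_one, ← ENNReal.ofReal_pow ENNReal.toReal_nonneg,
      ← ENNReal.ofReal_mul (by positivity),
      ← ENNReal.ofReal_add ENNReal.toReal_nonneg (by positivity)]
    exact ENNReal.ofReal_le_ofReal (Real.exp_sub_one_le_add_sq_mul_exp ENNReal.toReal_nonneg)

lemma ofReal_mul_eexp_sub_one_le (z : ℝ) (t : ℝ≥0∞) :
    ENNReal.ofReal z * eexp t - 1 ≤ ENNReal.ofReal (z - 1) * eexp t + (t + t ^ 2 * eexp t) := by
  have hz : ENNReal.ofReal z ≤ ENNReal.ofReal (z - 1) + 1 := by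
    simpa using ENNReal.ofReal_add_le (p := z - 1) (q := 1)
  rw [tsub_le_iff_right, add_assoc]
  calc ENNReal.ofReal z * eexp t ≤ ENNReal.ofReal (z - 1) * eexp t + eexp t := by
        simpa [add_mul] using mul_le_mul_left hz (eexp t)
    _ ≤ _ := by
        gcongr
        exact tsub_le_iff_right.1 (eexp_sub_one_le t)

section L2

variable {α : Type*} [MeasurableSpace α] {μ : Measure α}

lemma eLpNorm_two_eq (f : α → ℝ≥0∞) : eLpNorm f 2 μ = (∫⁻ x, f x ^ 2 ∂μ) ^ ((1 : ℝ) / 2) := by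
  rw [eLpNorm_eq_lintegral_rpow_enorm_toReal two_ne_zero ENNReal.ofNat_ne_top]
  simp

lemma eLpNorm_two_const_mul {c : ℝ≥0∞} (hc : c ≠ ⊤) (f : α → ℝ≥0∞) :
    eLpNorm (fun x => c * f x) 2 μ = c * eLpNorm f 2 μ := by
  simp_rw [eLpNorm_two_eq, mul_pow]
  rw [lintegral_const_mul' _ _ (ENNReal.pow_ne_top hc),
    ENNReal.mul_rpow_of_nonneg _ _ (by norm_num), ← ENNReal.rpow_natCast, ← ENNReal.rpow_mul]
  norm_num

lemma eLpNorm_two_iSup {g : ℕ → α → ℝ≥0∞} (hg : ∀ n, Measurable (g n)) (hmono : Monotone g) :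
    eLpNorm (⨆ n, g n) 2 μ = ⨆ n, eLpNorm (g n) 2 μ := by
  have hsq : ∀ x, (⨆ n, g n x) ^ 2 = ⨆ n, g n x ^ 2 := fun x =>
    (pow_left_mono 2).map_iSup_of_continuousAt (ENNReal.continuous_pow 2).continuousAt
      (zero_pow two_ne_zero)
  simp_rw [eLpNorm_two_eq, iSup_apply, hsq]
  rw [lintegral_iSup (fun n => (hg n).pow_const 2)
    fun m n hmn x => pow_le_pow_left' (hmono hmn x) 2]
  exact (ENNReal.monotone_rpow_of_nonneg (by norm_num)).map_iSup_of_continuousAt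
    (ENNReal.continuous_rpow_const.continuousAt) (ENNReal.zero_rpow_of_pos (by norm_num))

lemma ae_ne_top_of_eLpNorm_two_ne_top {f : α → ℝ≥0∞} (hf : Measurable f)
    (hfin : eLpNorm f 2 μ ≠ ⊤) : ∀ᵐ x ∂μ, f x ≠ ⊤ := by
  rw [eLpNorm_two_eq, ← lt_top_iff_ne_top, ENNReal.rpow_lt_top_iff_of_pos (by norm_num)] at hfin
  filter_upwards [ae_lt_top (hf.pow_const 2) hfin.ne] with x hx
  simpa using hx.ne

lemma lintegral_mul_le_eLpNorm_two_mul {f g : α → ℝ≥0∞} (hf : AEMeasurable f μ)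
    (hg : AEMeasurable g μ) : ∫⁻ x, f x * g x ∂μ ≤ eLpNorm f 2 μ * eLpNorm g 2 μ := by
  have h := ENNReal.lintegral_mul_le_Lp_mul_Lq μ Real.HolderConjugate.two_two hf hg
  simp only [Pi.mul_apply, ENNReal.rpow_ofNat] at h
  simpa only [eLpNorm_two_eq] using h

lemma eLpNorm_ofReal_le_sqrt_integral_sq {u : α → ℝ} (hu : Integrable (fun x => u x ^ 2) μ) :
    eLpNorm (fun x => ENNReal.ofReal (u x)) 2 μ ≤ ENNReal.ofReal √(∫ x, u x ^ 2 ∂μ) := by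
  rw [eLpNorm_two_eq, Real.sqrt_eq_rpow, ← ENNReal.ofReal_rpow_of_nonneg
    (integral_nonneg fun x => sq_nonneg _) (by norm_num), ofReal_integral_eq_lintegral_ofReal hu
    (ae_of_all _ fun x => sq_nonneg _)]
  gcongr with x
  calc ENNReal.ofReal (u x) ^ 2 ≤ ENNReal.ofReal |u x| ^ 2 := by gcongr; exact le_abs_self _
    _ = ENNReal.ofReal (u x ^ 2) := by rw [← ENNReal.ofReal_pow (abs_nonneg _), sq_abs]

end L2

section IntegralOperator

variable {S : Type*} [MeasurableSpace S] {μ : Measure S} {κ : S → S → ℝ}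

/-- The integral operator `T_κ`, acting on nonnegative functions. -/
noncomputable def intOp (μ : Measure S) (κ : S → S → ℝ) (g : S → ℝ≥0∞) (x : S) : ℝ≥0∞ :=
  ∫⁻ y, ENNReal.ofReal (κ x y) * g y ∂μ

lemma measurable_intOp [SFinite μ] (hκ : Measurable (uncurry κ)) {g : S → ℝ≥0∞}
    (hg : Measurable g) : Measurable (intOp μ κ g) :=
  ((ENNReal.measurable_ofReal.comp hκ).mul (hg.comp measurable_snd)).lintegral_prod_right'

lemma monotone_intOp : Monotone (intOp μ κ) := fun _ _ hgh _ =>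
  lintegral_mono fun y => mul_le_mul_right (hgh y) _

lemma intOp_iSup (hκ : Measurable (uncurry κ)) {g : ℕ → S → ℝ≥0∞} (hg : ∀ n, Measurable (g n))
    (hmono : Monotone g) : intOp μ κ (⨆ n, g n) = ⨆ n, intOp μ κ (g n) := by
  ext x
  simp_rw [intOp, iSup_apply, ENNReal.mul_iSup]
  exact lintegral_iSup
    (fun n => (ENNReal.measurable_ofReal.comp (hκ.comp measurable_prodMk_left)).mul (hg n))
    fun m n hmn y => mul_le_mul_right (hmono hmn y) _

lemma intOp_le_mul_eLpNorm (hκ : Measurable (uncurry κ)) {g : S → ℝ≥0∞} (hg : Measurable g)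
    (x : S) : intOp μ κ g x ≤ eLpNorm (fun y => ENNReal.ofReal (κ x y)) 2 μ * eLpNorm g 2 μ :=
  lintegral_mul_le_eLpNorm_two_mul
    (ENNReal.measurable_ofReal.comp (hκ.comp measurable_prodMk_left)).aemeasurable hg.aemeasurable

lemma opNorm_eq : opNorm μ κ =
    ⨆ (f : S → ℝ≥0∞) (_ : Measurable f) (_ : eLpNorm f 2 μ ≤ 1), eLpNorm (intOp μ κ f) 2 μ := by
  simp only [eLpNorm_two_eq, opNorm, intOp]

lemma eLpNorm_intOp_le {g : S → ℝ≥0∞} (hg : Measurable g) (hfin : eLpNorm g 2 μ ≠ ⊤) :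
    eLpNorm (intOp μ κ g) 2 μ ≤ opNorm μ κ * eLpNorm g 2 μ := by
  rcases eq_or_ne (eLpNorm g 2 μ) 0 with h0 | h0
  · have hg0 : g =ᵐ[μ] 0 := (eLpNorm_eq_zero_iff hg.aestronglyMeasurable two_ne_zero).1 h0
    have hT0 : intOp μ κ g = 0 := funext fun x =>
      (lintegral_congr_ae (hg0.mono fun y hy => by simp [hy])).trans lintegral_zero
    simp [hT0]
  · set c := eLpNorm g 2 μ
    have hscale : intOp μ κ (fun y => c⁻¹ * g y) = fun x => c⁻¹ * intOp μ κ g x := by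
      ext x
      simp_rw [intOp, mul_left_comm _ c⁻¹, lintegral_const_mul' _ _ (ENNReal.inv_ne_top.2 h0)]
    have hnorm : eLpNorm (fun y => c⁻¹ * g y) 2 μ ≤ 1 := by
      rw [eLpNorm_two_const_mul (ENNReal.inv_ne_top.2 h0), ENNReal.inv_mul_cancel h0 hfin]
    have hle : c⁻¹ * eLpNorm (intOp μ κ g) 2 μ ≤ opNorm μ κ := by
      rw [opNorm_eq, ← eLpNorm_two_const_mul (ENNReal.inv_ne_top.2 h0), ← hscale]
      exact le_iSup₂_of_le _ (measurable_const.mul hg) (le_iSup_of_le hnorm le_rfl)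
    rwa [← ENNReal.div_le_iff_le_mul (Or.inl h0) (Or.inl hfin), ENNReal.div_eq_inv_mul]

end IntegralOperator

lemma ENNReal.iSup_sub_fun {ι S : Type*} (f : ι → S → ℝ≥0∞) (c : S → ℝ≥0∞) :
    (⨆ i, f i) - c = ⨆ i, (f i - c) := by
  ext y; simp only [Pi.sub_apply, iSup_apply, ENNReal.iSup_sub]

section Phi

variable {S : Type*} [MeasurableSpace S] {μ : Measure S} {κ : S → S → ℝ} {z : ℝ}

lemma Phi_apply (f : S → ℝ≥0∞) (x : S) :
    Phi μ κ z f x = ENNReal.ofReal z * eexp (intOp μ κ (f - 1) x) := rfl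

lemma monotone_Phi : Monotone (Phi μ κ z) := fun _ _ hfg x =>
  mul_le_mul_right (monotone_eexp (monotone_intOp (fun y => tsub_le_tsub_right (hfg y) 1) x)) _

lemma one_le_Phi (hz : 1 ≤ z) (f : S → ℝ≥0∞) : 1 ≤ Phi μ κ z f := fun _ =>
  one_le_mul (ENNReal.one_le_ofReal.2 hz) (one_le_eexp _)

lemma measurable_Phi [SFinite μ] (hκ : Measurable (uncurry κ)) {f : S → ℝ≥0∞}
    (hf : Measurable f) : Measurable (Phi μ κ z f) :=
  measurable_const.mul
    (continuous_eexp.measurable.comp (measurable_intOp hκ (hf.sub measurable_one)))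

lemma measurable_iterate_Phi [SFinite μ] (hκ : Measurable (uncurry κ)) (n : ℕ) :
    Measurable ((Phi μ κ z)^[n] 1) := by
  induction n with
  | zero => exact measurable_const
  | succ n ih => rw [iterate_succ_apply']; exact measurable_Phi hκ ih

lemma Phi_iSup [SFinite μ] (hκ : Measurable (uncurry κ)) {f : ℕ → S → ℝ≥0∞}
    (hf : ∀ n, Measurable (f n)) (hmono : Monotone f) :
    Phi μ κ z (⨆ n, f n) = ⨆ n, Phi μ κ z (f n) := by
  ext x
  rw [Phi_apply, ENNReal.iSup_sub_fun, intOp_iSup (g := fun n => f n - 1) hκ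
    (fun n => (hf n).sub measurable_one) fun m n hmn => tsub_le_tsub_right (hmono hmn) 1,
    iSup_apply, eexp_iSup, ENNReal.mul_iSup, iSup_apply]
  rfl

lemma isFixedPt_Phi_iSup_iterate [SFinite μ] (hκ : Measurable (uncurry κ)) (hz : 1 ≤ z) :
    IsFixedPt (Phi μ κ z) (⨆ n, (Phi μ κ z)^[n] 1) := by
  have hmono : Monotone fun n => (Phi μ κ z)^[n] 1 :=
    monotone_Phi.monotone_iterate_of_le_map (one_le_Phi hz 1)
  rw [IsFixedPt, Phi_iSup hκ (measurable_iterate_Phi hκ) hmono]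
  simp_rw [← iterate_succ_apply' (Phi μ κ z)]
  exact le_antisymm (iSup_le fun n => le_iSup_of_le (n + 1) le_rfl)
    (iSup_le fun n => le_iSup_of_le n (hmono n.le_succ))

lemma Phi_sub_one_le {f w : S → ℝ≥0∞} (hw : intOp μ κ (f - 1) ≤ w) (x : S) :
    (Phi μ κ z f - 1) x ≤
      (ENNReal.ofReal (z - 1) * eexp (w x) + w x ^ 2 * eexp (w x)) + intOp μ κ (f - 1) x := by
  calc (Phi μ κ z f - 1) x
      ≤ ENNReal.ofReal (z - 1) * eexp (intOp μ κ (f - 1) x) + (intOp μ κ (f - 1) x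
          + intOp μ κ (f - 1) x ^ 2 * eexp (intOp μ κ (f - 1) x)) :=
        ofReal_mul_eexp_sub_one_le z _
    _ ≤ ENNReal.ofReal (z - 1) * eexp (w x) + (intOp μ κ (f - 1) x + w x ^ 2 * eexp (w x)) := by
        gcongr <;> first | exact monotone_eexp (hw x) | exact hw x
    _ = _ := by ring

lemma eLpNorm_Phi_sub_one_le [SFinite μ] (hκ : Measurable (uncurry κ)) {f w : S → ℝ≥0∞}
    (hf : Measurable f) (hw : Measurable w) (hfin : eLpNorm (f - 1) 2 μ ≠ ⊤)
    (hTw : intOp μ κ (f - 1) ≤ w) :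
    eLpNorm (Phi μ κ z f - 1) 2 μ ≤
      eLpNorm (fun x => ENNReal.ofReal (z - 1) * eexp (w x) + w x ^ 2 * eexp (w x)) 2 μ
        + opNorm μ κ * eLpNorm (f - 1) 2 μ := by
  have hmeas : Measurable fun x => ENNReal.ofReal (z - 1) * eexp (w x) + w x ^ 2 * eexp (w x) := by
    have := continuous_eexp.measurable.comp hw
    fun_prop
  calc eLpNorm (Phi μ κ z f - 1) 2 μ
      ≤ eLpNorm ((fun x => ENNReal.ofReal (z - 1) * eexp (w x) + w x ^ 2 * eexp (w x))
          + intOp μ κ (f - 1)) 2 μ :=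
        eLpNorm_mono_enorm fun x => by simpa using Phi_sub_one_le hTw x
    _ ≤ _ := eLpNorm_add_le hmeas.aestronglyMeasurable
          (measurable_intOp hκ (hf.sub measurable_one)).aestronglyMeasurable one_le_two
    _ ≤ _ := by gcongr; exact eLpNorm_intOp_le (hf.sub measurable_one) hfin

end Phi

theorem exists_fixedPt_Phi {S : Type*} [MeasurableSpace S] {μ : Measure S} [SFinite μ]
    {κ : S → S → ℝ} {z : ℝ} (hκ : Measurable (uncurry κ)) (hz : 1 ≤ z) {R : ℝ≥0∞} (hR : R ≠ ⊤)
    (hstep : ∀ f, Measurable f → eLpNorm (f - 1) 2 μ ≤ R → eLpNorm (Phi μ κ z f - 1) 2 μ ≤ R) :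
    ∃ f : S → ℝ≥0∞, Measurable f ∧ (∀ x, 1 ≤ f x) ∧ (∀ᵐ x ∂μ, f x ≠ ⊤) ∧
      IsFixedPt (Phi μ κ z) f := by
  set F : ℕ → S → ℝ≥0∞ := fun n => (Phi μ κ z)^[n] 1
  have hmono : Monotone F := monotone_Phi.monotone_iterate_of_le_map (one_le_Phi hz 1)
  have hbound : ∀ n, eLpNorm (F n - 1) 2 μ ≤ R := by
    intro n
    induction n with
    | zero => simp [F]
    | succ n ih =>
      simpa only [F, iterate_succ_apply'] using hstep _ (measurable_iterate_Phi hκ n) ih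
  have hsup : eLpNorm ((⨆ n, F n) - 1) 2 μ ≤ R := by
    rw [ENNReal.iSup_sub_fun, eLpNorm_two_iSup (g := fun n => F n - 1)
      (fun n => (measurable_iterate_Phi hκ n).sub measurable_one)
      fun m n hmn => tsub_le_tsub_right (hmono hmn) 1]
    exact iSup_le hbound
  have hmeas : Measurable (⨆ n, F n) := by
    convert Measurable.iSup (f := F) (measurable_iterate_Phi hκ) using 1
    ext x; exact iSup_apply
  have hone : ∀ x, 1 ≤ (⨆ n, F n) x := fun x => by
    rw [iSup_apply]; exact le_iSup_of_le 0 le_rfl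
  refine ⟨⨆ n, F n, hmeas, hone, ?_, isFixedPt_Phi_iSup_iterate hκ hz⟩
  filter_upwards [ae_ne_top_of_eLpNorm_two_ne_top (hmeas.sub measurable_one)
    (hsup.trans_lt hR.lt_top).ne] with x hx htop
  exact hx (by simp [htop])

lemma Real.sq_mul_exp_le_mul_exp {c r t : ℝ} (hc : 0 < c) (hrc : 2 * r ≤ c) (ht : 0 ≤ t) :
    t ^ 2 * Real.exp (r * t) ≤ (4 / c) ^ 2 * Real.exp (c * t) := by
  have hlin : t ≤ 4 / c * Real.exp (c / 4 * t) := by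
    have := Real.add_one_le_exp (c / 4 * t)
    calc t = 4 / c * (c / 4 * t) := by field_simp
      _ ≤ 4 / c * Real.exp (c / 4 * t) := by gcongr; linarith
  calc t ^ 2 * Real.exp (r * t) ≤ (4 / c * Real.exp (c / 4 * t)) ^ 2 * Real.exp (c / 2 * t) := by
        gcongr
        nlinarith
    _ = (4 / c) ^ 2 * Real.exp (c * t) := by
        rw [mul_pow, mul_assoc, ← Real.exp_nat_mul, ← Real.exp_add]
        ring_nf

lemma exists_invariant_radius {N M D : ℝ≥0∞} (hN : N < 1) (hM : M ≠ ⊤) (hD : D ≠ ⊤) {r₀ : ℝ}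
    (hr₀ : 0 < r₀) :
    ∃ r ε : ℝ, 0 < r ∧ r ≤ r₀ ∧ 0 < ε ∧
      ENNReal.ofReal ε * M + ENNReal.ofReal r ^ 2 * D + N * ENNReal.ofReal r
        ≤ ENNReal.ofReal r := by
  obtain ⟨ν, hν0, rfl⟩ : ∃ ν : ℝ, 0 ≤ ν ∧ N = ENNReal.ofReal ν :=
    ⟨N.toReal, ENNReal.toReal_nonneg, (ENNReal.ofReal_toReal hN.ne_top).symm⟩
  obtain ⟨m, hm0, rfl⟩ : ∃ m : ℝ, 0 ≤ m ∧ M = ENNReal.ofReal m :=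
    ⟨M.toReal, ENNReal.toReal_nonneg, (ENNReal.ofReal_toReal hM).symm⟩
  obtain ⟨d, hd0, rfl⟩ : ∃ d : ℝ, 0 ≤ d ∧ D = ENNReal.ofReal d :=
    ⟨D.toReal, ENNReal.toReal_nonneg, (ENNReal.ofReal_toReal hD).symm⟩
  have hν1 : ν < 1 := by simpa using (ENNReal.ofReal_lt_one).1 hN
  -- `ε M` and `r² D` each take half of the gap `(1 - ν) r`.
  set r := min r₀ ((1 - ν) / (2 * (d + 1)))
  have hr : 0 < r := lt_min hr₀ (by apply div_pos <;> linarith)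
  have hrd : r * (2 * (d + 1)) ≤ 1 - ν := (le_div_iff₀ (by linarith)).1 (min_le_right _ _)
  set ε := (1 - ν) * r / (2 * (m + 1))
  have hε : 0 < ε := by apply div_pos <;> nlinarith
  have hεm : ε * (2 * (m + 1)) = (1 - ν) * r := div_mul_cancel₀ _ (by linarith)
  refine ⟨r, ε, hr, min_le_left _ _, hε, ?_⟩
  rw [← ENNReal.ofReal_pow hr.le, ← ENNReal.ofReal_mul hε.le, ← ENNReal.ofReal_mul (by positivity),
    ← ENNReal.ofReal_mul hν0, ← ENNReal.ofReal_add (by positivity) (by positivity),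
    ← ENNReal.ofReal_add (by positivity) (by positivity)]
  exact ENNReal.ofReal_le_ofReal (by nlinarith)

lemma eLpNorm_Phi_sub_one_le_of_ball {S : Type*} [MeasurableSpace S] {μ : Measure S} [SFinite μ]
    {κ : S → S → ℝ} (hκ : Measurable (uncurry κ)) {ψ : S → ℝ} (hψ : Measurable ψ)
    (hψ0 : ∀ x, 0 ≤ ψ x)
    (hκψ : ∀ x, eLpNorm (fun y => ENNReal.ofReal (κ x y)) 2 μ ≤ ENNReal.ofReal (ψ x))
    (z : ℝ) {c r : ℝ} (hr : 0 < r) (hrc : 2 * r ≤ c) {f : S → ℝ≥0∞} (hf : Measurable f)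
    (hfr : eLpNorm (f - 1) 2 μ ≤ ENNReal.ofReal r) :
    eLpNorm (Phi μ κ z f - 1) 2 μ ≤
      ENNReal.ofReal (z - 1) * eLpNorm (fun x => ENNReal.ofReal (Real.exp (c * ψ x))) 2 μ
        + ENNReal.ofReal r ^ 2 * (ENNReal.ofReal ((4 / c) ^ 2)
          * eLpNorm (fun x => ENNReal.ofReal (Real.exp (c * ψ x))) 2 μ)
        + opNorm μ κ * ENNReal.ofReal r := by
  set w : S → ℝ≥0∞ := fun x => ENNReal.ofReal (r * ψ x)
  have hc : 0 < c := by linarith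
  have hTw : intOp μ κ (f - 1) ≤ w := fun x => by
    calc intOp μ κ (f - 1) x ≤ ENNReal.ofReal (ψ x) * ENNReal.ofReal r :=
          (intOp_le_mul_eLpNorm hκ (hf.sub measurable_one) x).trans (by gcongr; exact hκψ x)
      _ = w x := by rw [← ENNReal.ofReal_mul (hψ0 x), mul_comm]
  have hwbound : ∀ x, ENNReal.ofReal (z - 1) * eexp (w x) + w x ^ 2 * eexp (w x) ≤
      (ENNReal.ofReal (z - 1) + ENNReal.ofReal r ^ 2 * ENNReal.ofReal ((4 / c) ^ 2))
        * ENNReal.ofReal (Real.exp (c * ψ x)) := fun x => by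
    have hrψ : 0 ≤ r * ψ x := mul_nonneg hr.le (hψ0 x)
    rw [eexp_ofReal hrψ, add_mul, mul_assoc]
    gcongr ?_ + ?_
    · gcongr
      · exact hψ0 x
      · linarith
    · rw [← ENNReal.ofReal_pow hrψ, ← ENNReal.ofReal_pow hr.le,
        ← ENNReal.ofReal_mul (by positivity), ← ENNReal.ofReal_mul (by positivity),
        ← ENNReal.ofReal_mul (by positivity), mul_pow, mul_assoc]
      exact ENNReal.ofReal_le_ofReal (mul_le_mul_of_nonneg_left
        (Real.sq_mul_exp_le_mul_exp hc hrc (hψ0 x)) (sq_nonneg r))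
  calc eLpNorm (Phi μ κ z f - 1) 2 μ
      ≤ eLpNorm (fun x => ENNReal.ofReal (z - 1) * eexp (w x) + w x ^ 2 * eexp (w x)) 2 μ
          + opNorm μ κ * eLpNorm (f - 1) 2 μ :=
        eLpNorm_Phi_sub_one_le hκ hf (by fun_prop) (hfr.trans_lt ENNReal.ofReal_lt_top).ne hTw
    _ ≤ (ENNReal.ofReal (z - 1) + ENNReal.ofReal r ^ 2 * ENNReal.ofReal ((4 / c) ^ 2))
          * eLpNorm (fun x => ENNReal.ofReal (Real.exp (c * ψ x))) 2 μ
          + opNorm μ κ * ENNReal.ofReal r := by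
        gcongr
        rw [← eLpNorm_two_const_mul (by finiteness)]
        exact eLpNorm_mono_enorm fun x => by simpa only [enorm_eq_self] using hwbound x
    _ = _ := by ring

theorem stmt7_general (S : Set ℝ) (μ : Measure S) [IsProbabilityMeasure μ]
    (κ : S → S → ℝ) (hκmeas : Measurable (Function.uncurry κ))
    (hκ2 : ∀ x, Integrable (fun y => κ x y ^ 2) μ)
    (ψ : S → ℝ) (hψ : ∀ x, ψ x = Real.sqrt (∫ y, κ x y ^ 2 ∂μ))
    (a : ℝ) (ha : 0 < a)
    (hexp : Integrable (fun x => Real.exp (a * ψ x)) μ)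
    (hnorm : opNorm μ κ < 1) :
    ∃ z : ℝ, 1 < z ∧ ∃ f : S → ℝ≥0∞, Measurable f ∧ (∀ x, 1 ≤ f x) ∧
      (∀ᵐ x ∂μ, f x ≠ ⊤) ∧ (∀ᵐ x ∂μ, Phi μ κ z f x = f x) := by
  have hψmeas : Measurable ψ := by
    rw [funext hψ]
    exact (hκmeas.pow_const 2).stronglyMeasurable.integral_prod_right'.measurable.sqrt
  have hκψ x : eLpNorm (fun y => ENNReal.ofReal (κ x y)) 2 μ ≤ ENNReal.ofReal (ψ x) :=
    hψ x ▸ eLpNorm_ofReal_le_sqrt_integral_sq (hκ2 x)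
  set M := eLpNorm (fun x => ENNReal.ofReal (Real.exp (a / 2 * ψ x))) 2 μ
  have hM : M ≠ ⊤ := by
    refine ((eLpNorm_ofReal_le_sqrt_integral_sq ?_).trans_lt ENNReal.ofReal_lt_top).ne
    convert hexp using 2 with x
    rw [← Real.exp_nat_mul]
    ring_nf
  obtain ⟨r, ε, hr, hra, hε, hball⟩ := exists_invariant_radius
    (D := ENNReal.ofReal ((4 / (a / 2)) ^ 2) * M) (r₀ := a / 4) hnorm hM (by finiteness)
    (by positivity)
  have hstep f (hf : Measurable f) (hfr : eLpNorm (f - 1) 2 μ ≤ ENNReal.ofReal r) :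
      eLpNorm (Phi μ κ (1 + ε) f - 1) 2 μ ≤ ENNReal.ofReal r := by
    refine (eLpNorm_Phi_sub_one_le_of_ball hκmeas hψmeas (fun x => hψ x ▸ Real.sqrt_nonneg _)
      hκψ (1 + ε) (c := a / 2) hr (by linarith) hf hfr).trans ?_
    simpa using hball
  obtain ⟨f, hf, hf1, hfin, hfix⟩ :=
    exists_fixedPt_Phi hκmeas (by linarith) ENNReal.ofReal_ne_top hstep
  exact ⟨1 + ε, by linarith, f, hf, hf1, hfin, ae_of_all _ (congr_fun hfix)⟩

theorem stmt7 (S : Set ℝ) (μ : Measure S) [IsProbabilityMeasure μ]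
    (κ : S → S → ℝ) (hκmeas : Measurable (Function.uncurry κ))
    (hκsymm : ∀ x y, κ x y = κ y x)
    (hκinf : ∃ b : ℝ, 0 < b ∧ ∀ x y, b ≤ κ x y)
    (hmono₁ : ∀ x x' y : S, (x : ℝ) ≤ (x' : ℝ) → κ x y ≤ κ x' y)
    (hmono₂ : ∀ x y y' : S, (y : ℝ) ≤ (y' : ℝ) → κ x y ≤ κ x y')
    (c₁ : ℝ) (hc₁ : 0 < c₁)
    (hTT : ∀ x y, κ x y ≤ c₁ * (∫ y', κ x y' ∂μ) * (∫ y', κ y y' ∂μ))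
    (hκ2 : ∀ x, Integrable (fun y => κ x y ^ 2) μ)
    (ψ : S → ℝ) (hψ : ∀ x, ψ x = Real.sqrt (∫ y, κ x y ^ 2 ∂μ))
    (a : ℝ) (ha : 0 < a)
    (hexp : Integrable (fun x => Real.exp (a * ψ x)) μ)
    (hnorm : opNorm μ κ < 1) :
    ∃ z : ℝ, 1 < z ∧ ∃ f : S → ℝ≥0∞, Measurable f ∧ (∀ x, 1 ≤ f x) ∧
      (∀ᵐ x ∂μ, f x ≠ ⊤) ∧ (∀ᵐ x ∂μ, Phi μ κ z f x = f x) :=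
  stmt7_general S μ κ hκmeas hκ2 ψ hψ a ha hexp hnorm
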